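/- Let N be a non-abelian minimal normal subgroup of a finite group G. Then N is contained in the kernel of every irreducible complex character of G of degree at most 2. -/

import Mathlib

/-!
If `ρ` is a representation of `G` of dimension at most `2`, then `N ⊓ ker ρ` is normal in `G`, so
either `N ≤ ker ρ` or `ρ` is faithful on `N`; we rule out the latter. Minimality and
non-commutativity make `N` perfect with trivial centre, and perfectness gives `det ρ = 1` on `N`,
which already makes `ρ` trivial in dimension at most `1`.

In dimension `2`, Cayley–Hamilton gives `ρ h + ρ h⁻¹ = χ h` on `N`. So an involution of `N` acts
as a scalar, hence is central, and `|N|` is odd; an element fixing a nonzero vector is unipotent of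
finite order, hence trivial, so `N` has no invariant vectors, and (since `N` acts trivially on any
invariant line) `ρ` is irreducible on `N`. Finally `χ h * χ h⁻¹ = χ (h ^ 2) + 2` and squaring
permutes `N`, so orthogonality gives `|N| = ∑ χ + 2 |N| = 2 |N|`, as `∑ χ = 0` for lack of
invariant vectors.
-/

open CategoryTheory

/-- The set of irreducible complex characters of `G`: characters of simple
finite-dimensional complex representations of `G`. -/
noncomputable def IrrChar (G : Type) [Group G] : Set (G → ℂ) :=
  {χ | ∃ V : FDRep ℂ G, Simple V ∧ χ = fun g => V.character g}

/-- The degree of a character, read off from its value at `1`. -/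
noncomputable def charDeg {G : Type} [Group G] (χ : G → ℂ) : ℕ :=
  ⌊(χ 1).re⌋₊

/-- The average degree of the irreducible characters of `G` satisfying a
predicate `p` (with the convention that the average of the empty set is `0`). -/
noncomputable def acdRel (G : Type) [Group G] (p : (G → ℂ) → Prop) : ℝ :=
  (∑ᶠ χ ∈ {χ ∈ IrrChar G | p χ}, (charDeg χ : ℝ)) /
    ({χ ∈ IrrChar G | p χ} : Set (G → ℂ)).ncard

/-- The average character degree of `G`. -/
noncomputable def acd (G : Type) [Group G] : ℝ := acdRel G fun _ => True

open Module

theorem Matrix.add_eq_trace_smul_one_of_mul_eq_one {R : Type*} [CommRing R]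
    {A B : Matrix (Fin 2) (Fin 2) R} (hAB : A * B = 1) (hdet : A.det = 1) :
    A + B = A.trace • 1 := by
  have hB : B = A.adjugate := by
    rw [← one_mul B, ← one_smul R (1 : Matrix _ _ R), ← hdet, ← Matrix.adjugate_mul,
      Matrix.mul_assoc, hAB, Matrix.mul_one]
  subst hB
  ext i j
  fin_cases i <;> fin_cases j <;>
    simp [Matrix.adjugate_fin_two, Matrix.trace_fin_two, add_comm]

namespace LinearMap

variable {K V : Type*} [Field K] [AddCommGroup V] [Module K V] [FiniteDimensional K V]
  (h2 : finrank K V = 2) {f g : Module.End K V}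

include h2 in
theorem add_eq_trace_smul_one_of_mul_eq_one (hfg : f * g = 1) (hdet : LinearMap.det f = 1) :
    f + g = trace K V f • 1 := by
  let b := Module.finBasisOfFinrankEq K V h2
  apply (toMatrixAlgEquiv b).injective
  rw [map_add, map_smul, map_one, trace_eq_matrix_trace K b]
  apply Matrix.add_eq_trace_smul_one_of_mul_eq_one
  · rw [← map_mul, hfg, map_one]
  · exact (det_toMatrix b f).trans hdet

theorem eq_one_of_det_eq_one_of_finrank_le_one (h1 : finrank K V ≤ 1)
    (hdet : LinearMap.det f = 1) : f = 1 := by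
  rcases Nat.le_one_iff_eq_zero_or_eq_one.mp h1 with h0 | h1
  · have := Module.finrank_zero_iff.mp h0
    exact Subsingleton.elim _ _
  · obtain ⟨c, rfl, -⟩ := existsUnique_eq_smul_id_of_finrank_eq_one h1 f
    rw [det_smul, det_id, h1, pow_one, mul_one] at hdet
    rw [hdet, one_smul, Module.End.one_eq_id]

include h2

theorem trace_eq_trace_of_mul_eq_one (hfg : f * g = 1) (hdet : LinearMap.det f = 1) :
    trace K V g = trace K V f := by
  have h := congrArg (trace K V) (add_eq_trace_smul_one_of_mul_eq_one h2 hfg hdet)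
  rw [map_add, map_smul, trace_one, h2] at h
  linear_combination h

theorem trace_mul_trace_of_mul_eq_one (hfg : f * g = 1) (hdet : LinearMap.det f = 1) :
    trace K V f * trace K V g = trace K V (f * f) + 2 := by
  have hff : f * f = trace K V f • f - 1 := by
    rw [← hfg, ← mul_smul_one, ← mul_sub, ← add_eq_trace_smul_one_of_mul_eq_one h2 hfg hdet,
      add_sub_cancel_right]
  rw [trace_eq_trace_of_mul_eq_one h2 hfg hdet, hff, map_sub, map_smul, trace_one, h2, smul_eq_mul]
  ring

theorem exists_eq_smul_one_of_mul_self_eq_one [NeZero (2 : K)] (hff : f * f = 1)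
    (hdet : LinearMap.det f = 1) : ∃ c : K, f = c • 1 := by
  refine ⟨trace K V f / 2, ?_⟩
  rw [div_eq_inv_mul, mul_smul, ← add_eq_trace_smul_one_of_mul_eq_one h2 hff hdet,
    ← two_smul K f, smul_smul, inv_mul_cancel₀ two_ne_zero, one_smul]

theorem sub_one_mul_self_eq_zero_of_apply_eq_self (hfg : f * g = 1) (hdet : LinearMap.det f = 1)
    {u : V} (hu : u ≠ 0) (hfu : f u = u) : (f - 1) * (f - 1) = 0 := by
  have hadd := add_eq_trace_smul_one_of_mul_eq_one h2 hfg hdet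
  have hgu : g u = u := by
    conv_lhs => rw [← hfu]
    rw [← Module.End.mul_apply, mul_eq_one_comm.mp hfg, Module.End.one_apply]
  have htr : trace K V f = 2 := by
    have h := congrArg (· u) hadd
    simp only [add_apply, hfu, hgu, smul_apply, Module.End.one_apply, ← two_smul K u] at h
    exact (smul_left_injective K hu h).symm
  calc (f - 1) * (f - 1) = f * (f + g) - 2 • f := by
        rw [mul_add, hfg]; noncomm_ring
    _ = 0 := by rw [hadd, htr, mul_smul_one, two_smul, two_smul, sub_self]

end LinearMap

namespace Module.End

variable {K V : Type*} [Field K] [CharZero K] [AddCommGroup V] [Module K V]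

theorem eq_one_of_pow_eq_one_of_sub_one_mul_self_eq_zero {f : Module.End K V} {m : ℕ} (hm : 0 < m)
    (hfm : f ^ m = 1) (hf : (f - 1) * (f - 1) = 0) : f = 1 := by
  obtain ⟨η, rfl⟩ : ∃ η, f = 1 + η := ⟨f - 1, by abel⟩
  rw [add_sub_cancel_left] at hf
  have hpow : ∀ k : ℕ, (1 + η) ^ k = 1 + k • η := by
    intro k
    induction k with
    | zero => simp
    | succ k ih =>
      simp only [pow_succ, ih, add_mul, mul_add, one_mul, mul_one, smul_mul_assoc, hf, smul_zero,
        add_zero, succ_nsmul]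
      abel
  have hm' : (m : K) • η = 0 := by
    rw [Nat.cast_smul_eq_nsmul, ← add_eq_left (a := 1), ← hpow, hfm]
  rw [(smul_eq_zero.mp hm').resolve_left (Nat.cast_ne_zero.mpr hm.ne'), add_zero]

end Module.End

theorem MonoidHom.apply_eq_one_of_commutator_eq_top {H M : Type*} [Group H] [CommMonoid M]
    (hH : commutator H = ⊤) (f : H →* M) (h : H) : f h = 1 := by
  have := Abelianization.commutator_subset_ker f.toHomUnits (hH ▸ Subgroup.mem_top h)
  exact congrArg Units.val this

namespace Representation

variable {K H V : Type*} [Field K] [Group H] [AddCommGroup V] [Module K V] [FiniteDimensional K V]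
  {ρ : Representation K H V}

theorem apply_eq_one_of_apply_eq_self [Finite H] [CharZero K] (h2 : finrank K V = 2) {h : H}
    (hdet : LinearMap.det (ρ h) = 1) {u : V} (hu : u ≠ 0) (hhu : ρ h u = u) : ρ h = 1 := by
  have hinv : ρ h * ρ h⁻¹ = 1 := by rw [← map_mul, mul_inv_cancel, map_one]
  refine Module.End.eq_one_of_pow_eq_one_of_sub_one_mul_self_eq_zero (orderOf_pos h) ?_
    (LinearMap.sub_one_mul_self_eq_zero_of_apply_eq_self h2 hinv hdet hu hhu)
  rw [← map_pow, pow_orderOf_eq_one, map_one]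

theorem invariants_eq_bot_of_injective [Finite H] [Nontrivial H] [CharZero K]
    (h2 : finrank K V = 2) (hdet : ∀ h, LinearMap.det (ρ h) = 1) (hinj : Function.Injective ρ) :
    invariants ρ = ⊥ := by
  rw [Submodule.eq_bot_iff]
  intro u hu
  by_contra hu0
  obtain ⟨h, hh⟩ := exists_ne (1 : H)
  exact hh (hinj (by rw [map_one]; exact apply_eq_one_of_apply_eq_self h2 (hdet h) hu0 (hu h)))

theorem isIrreducible_of_invariants_eq_bot (hH : commutator H = ⊤) (h2 : finrank K V = 2)
    (hinv : invariants ρ = ⊥) : ρ.IsIrreducible := by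
  have : Nontrivial V := Module.nontrivial_of_finrank_eq_succ h2
  have : Nontrivial (Subrepresentation ρ) :=
    ⟨⊥, ⊤, fun h => bot_ne_top (congrArg Subrepresentation.toSubmodule h)⟩
  refine ⟨fun σ => ?_⟩
  by_contra! hσ
  have hbot : σ.toSubmodule ≠ ⊥ := fun h => hσ.1 (Subrepresentation.ext h)
  have htop : σ.toSubmodule ≠ ⊤ := fun h => hσ.2 (Subrepresentation.ext h)
  have h1 : finrank K σ.toSubmodule ≤ 1 := by
    have := Submodule.finrank_lt htop
    omega
  have hfix : ∀ h, σ.toRepresentation h = 1 := fun h =>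
    LinearMap.eq_one_of_det_eq_one_of_finrank_le_one h1
      ((LinearMap.det.comp σ.toRepresentation).apply_eq_one_of_commutator_eq_top hH h)
  apply hbot
  rw [eq_bot_iff, ← hinv]
  intro u hu h
  exact congrArg Subtype.val (LinearMap.congr_fun (hfix h) ⟨u, hu⟩)

theorem odd_card_of_injective [Finite H] [NeZero (2 : K)] (hcenter : Subgroup.center H = ⊥)
    (h2 : finrank K V = 2) (hdet : ∀ h, LinearMap.det (ρ h) = 1) (hinj : Function.Injective ρ) :
    Odd (Nat.card H) := by
  by_contra hev
  obtain ⟨x, hx⟩ := exists_prime_orderOf_dvd_card' 2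
    (even_iff_two_dvd.mp (Nat.not_odd_iff_even.mp hev))
  have hxx : ρ x * ρ x = 1 := by rw [← map_mul, ← sq, ← hx, pow_orderOf_eq_one, map_one]
  obtain ⟨c, hc⟩ := LinearMap.exists_eq_smul_one_of_mul_self_eq_one h2 hxx (hdet x)
  have hxc : x ∈ Subgroup.center H := Subgroup.mem_center_iff.mpr fun y =>
    hinj (by rw [map_mul, map_mul, hc, mul_smul_one, smul_one_mul])
  rw [hcenter, Subgroup.mem_bot] at hxc
  rw [hxc, orderOf_one] at hx
  omega

theorem sum_char_mul_char_inv_of_odd_card [Fintype H] (hodd : Odd (Nat.card H))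
    (h2 : finrank K V = 2) (hdet : ∀ h, LinearMap.det (ρ h) = 1) :
    ∑ h, ρ.character h * ρ.character h⁻¹ = ∑ h, ρ.character h + 2 * Nat.card H := by
  have hsq : ∀ h, ρ.character h * ρ.character h⁻¹ = ρ.character (h ^ 2) + 2 := fun h => by
    rw [sq, character, character, character, map_mul]
    exact LinearMap.trace_mul_trace_of_mul_eq_one h2 (by rw [← map_mul, mul_inv_cancel, map_one])
      (hdet h)
  rw [Finset.sum_congr rfl fun h _ => hsq h, Finset.sum_add_distrib, Finset.sum_const,
    Finset.card_univ, ← Nat.card_eq_fintype_card, nsmul_eq_mul, mul_comm]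
  congr 1
  exact (powCoprime (Nat.coprime_two_right.mpr hodd)).sum_comp ρ.character

theorem not_injective_of_finrank_eq_two [Finite H] [Nontrivial H] [IsAlgClosed K] [CharZero K]
    (hH : commutator H = ⊤) (hcenter : Subgroup.center H = ⊥) (h2 : finrank K V = 2) :
    ¬ Function.Injective ρ := by
  intro hinj
  have := Fintype.ofFinite H
  have hdet := (LinearMap.det.comp ρ).apply_eq_one_of_commutator_eq_top hH
  have hinv := invariants_eq_bot_of_injective h2 hdet hinj
  have := isIrreducible_of_invariants_eq_bot hH h2 hinv
  have hcard : (Nat.card H : K) ≠ 0 := Nat.cast_ne_zero.mpr Nat.card_pos.ne'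
  have := invertibleOfNonzero hcard
  have hsum := card_inv_mul_sum_char_eq_finrank ρ
  have hnorm := char_orthonormal ρ ρ
  have hodd := odd_card_of_injective hcenter h2 hdet hinj
  rw [if_pos ⟨Equiv.refl ρ⟩, sum_char_mul_char_inv_of_odd_card hodd h2 hdet, mul_add, hsum, hinv,
    finrank_bot, mul_left_comm, inv_mul_cancel₀ hcard] at hnorm
  norm_num at hnorm

theorem not_injective_of_finrank_le_two [Finite H] [Nontrivial H] [IsAlgClosed K] [CharZero K]
    (hH : commutator H = ⊤) (hcenter : Subgroup.center H = ⊥) (h2 : finrank K V ≤ 2) :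
    ¬ Function.Injective ρ := by
  rcases (show finrank K V ≤ 1 ∨ finrank K V = 2 by omega) with h1 | h2
  · intro hinj
    obtain ⟨h, hh⟩ := exists_ne (1 : H)
    refine hh (hinj ?_)
    rw [map_one]
    exact LinearMap.eq_one_of_det_eq_one_of_finrank_le_one h1
      ((LinearMap.det.comp ρ).apply_eq_one_of_commutator_eq_top hH h)
  · exact not_injective_of_finrank_eq_two hH hcenter h2

end Representation

namespace Subgroup

variable {G : Type*} [Group G] {N : Subgroup G} [N.Normal]
  (hmin : ∀ K : Subgroup G, K.Normal → K ≤ N → K = ⊥ ∨ K = N)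
  (hna : ∃ x y : N, x * y ≠ y * x)
include hmin hna

theorem commutator_eq_top_of_minimal_normal : _root_.commutator N = ⊤ := by
  apply map_injective N.subtype_injective
  rw [map_subtype_commutator, ← MonoidHom.range_eq_map, range_subtype]
  refine (hmin _ inferInstance (commutator_le_left N N)).resolve_left fun h => ?_
  obtain ⟨x, y, hxy⟩ := hna
  refine hxy (Subtype.ext ?_)
  exact commutatorElement_eq_one_iff_mul_comm.mp (h ▸ commutator_mem_commutator x.2 y.2 :)

theorem center_eq_bot_of_minimal_normal : center N = ⊥ := by
  rw [← map_eq_bot_iff_of_injective _ N.subtype_injective]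
  refine (hmin _ inferInstance (map_subtype_le _)).resolve_right fun h => ?_
  obtain ⟨x, y, hxy⟩ := hna
  have hx : x ∈ center N :=
    (mem_map_iff_mem N.subtype_injective).mp (h.symm ▸ x.2 : (x : G) ∈ (center N).map N.subtype)
  exact hxy (mem_center_iff.mp hx y).symm

end Subgroup

/-- A non-abelian minimal normal subgroup of a finite group `G` is contained in
the kernel of every irreducible character of `G` of degree at most `2`. -/
theorem minimal_normal_le_ker_of_degree_le_two (G : Type) [Group G] [Finite G]
    (N : Subgroup G) [N.Normal] (hnt : N ≠ ⊥)
    (hmin : ∀ K : Subgroup G, K.Normal → K ≤ N → K = ⊥ ∨ K = N)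
    (hna : ∃ x y : N, x * y ≠ y * x) :
    ∀ χ ∈ IrrChar G, charDeg χ ≤ 2 → ∀ n ∈ N, χ n = χ 1 := by
  rintro χ ⟨V, -, rfl⟩ hdeg n hn
  have hdim : finrank ℂ V ≤ 2 := by simpa [charDeg] using hdeg
  have : Nontrivial N := (N.nontrivial_iff_ne_bot).mpr hnt
  rcases hmin (N ⊓ V.ρ.ker) inferInstance inf_le_left with hker | hker
  · refine absurd ?_ (Representation.not_injective_of_finrank_le_two
      (Subgroup.commutator_eq_top_of_minimal_normal hmin hna)
      (Subgroup.center_eq_bot_of_minimal_normal hmin hna) hdim (ρ := V.ρ.comp N.subtype))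
    refine (injective_iff_map_eq_one _).mpr fun m hm => Subtype.ext ?_
    exact Subgroup.mem_bot.mp (hker.le ⟨m.2, hm⟩)
  · have hρ : V.ρ n = 1 := (hker.ge hn).2
    simp only [FDRep.character, hρ, map_one]
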